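/- arXiv:1810.04120 — 5 statements merged into one kernel-verified Lean document; each statement's English description precedes it below -/
import Mathlib

section
/- Let G be a graph with n vertices and m edges whose largest adjacency eigenvalue λ₁ satisfies λ₁ ≥ 2m/n. Then EE(G) ≥ e^{2m/n} + (n - 1) - 2m/n. -/
/-! The eigenvalues of the adjacency matrix sum to its trace, which is `0`. Since
`exp t - t - 1 ≥ 0` for all `t`, and `exp t - t` is increasing on `[0, ∞)`,
`∑ exp λᵢ = ∑ (λᵢ + 1) + ∑ (exp λᵢ - λᵢ - 1) ≥ n + (exp (2m/n) - 2m/n - 1)`,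
keeping only the term of the eigenvalue `λ ≥ 2m/n` in the second sum. -/

open Finset

lemma Real.exp_sub_le_exp_sub_of_le {c x : ℝ} (hc : 0 ≤ c) (hcx : c ≤ x) :
    Real.exp c - c ≤ Real.exp x - x := by
  have hexp : Real.exp x = Real.exp c * Real.exp (x - c) := by
    rw [← Real.exp_add, add_sub_cancel]
  have h1 : 1 ≤ Real.exp c := Real.one_le_exp hc
  have h2 : x - c + 1 ≤ Real.exp (x - c) := Real.add_one_le_exp _
  nlinarith

lemma Real.add_card_sub_le_sum_exp {ι : Type*} [Fintype ι] {x : ι → ℝ} (hx : ∑ i, x i = 0)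
    {c : ℝ} (hc : 0 ≤ c) {i₀ : ι} (hi₀ : c ≤ x i₀) :
    Real.exp c + ((Fintype.card ι : ℝ) - 1) - c ≤ ∑ i, Real.exp (x i) := by
  have hgap : Real.exp c - c - 1 ≤ ∑ i, (Real.exp (x i) - x i - 1) :=
    calc Real.exp c - c - 1 ≤ Real.exp (x i₀) - x i₀ - 1 := by
          linarith [Real.exp_sub_le_exp_sub_of_le hc hi₀]
      _ ≤ ∑ i, (Real.exp (x i) - x i - 1) :=
          single_le_sum (f := fun i ↦ Real.exp (x i) - x i - 1)
            (fun i _ ↦ by linarith [Real.add_one_le_exp (x i)]) (mem_univ i₀)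
  simp only [sum_sub_distrib, hx, sum_const, card_univ, nsmul_eq_mul, mul_one] at hgap
  linarith

lemma SimpleGraph.sum_eigenvalues_adjMatrix_eq_zero {V : Type*} [Fintype V] [DecidableEq V]
    (G : SimpleGraph V) [DecidableRel G.Adj] (hH : (G.adjMatrix ℝ).IsHermitian) :
    ∑ i, hH.eigenvalues i = 0 := by
  simpa using (hH.trace_eq_sum_eigenvalues.symm.trans (G.trace_adjMatrix ℝ))

theorem stmt_2_general {n : ℕ} (G : SimpleGraph (Fin n)) [DecidableRel G.Adj]
    (m : ℕ)
    (hH : (G.adjMatrix ℝ).IsHermitian)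
    (i₀ : Fin n)
    (hlam : hH.eigenvalues i₀ ≥ 2 * (m : ℝ) / n) :
    ∑ i, Real.exp (hH.eigenvalues i) ≥
      Real.exp (2 * (m : ℝ) / n) + ((n : ℝ) - 1) - 2 * (m : ℝ) / n := by
  simpa using Real.add_card_sub_le_sum_exp (G.sum_eigenvalues_adjMatrix_eq_zero hH)
    (by positivity) hlam

theorem stmt_2 {n : ℕ} (G : SimpleGraph (Fin n)) [DecidableRel G.Adj]
    (m : ℕ) (hm : m = G.edgeFinset.card)
    (hH : (G.adjMatrix ℝ).IsHermitian)
    (i₀ : Fin n) (hmax : ∀ i, hH.eigenvalues i ≤ hH.eigenvalues i₀)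
    (hlam : hH.eigenvalues i₀ ≥ 2 * (m : ℝ) / n) :
    ∑ i, Real.exp (hH.eigenvalues i) ≥
      Real.exp (2 * (m : ℝ) / n) + ((n : ℝ) - 1) - 2 * (m : ℝ) / n :=
  stmt_2_general G m hH i₀ hlam
end

section
/- Let G be a connected α-regular graph with n vertices. Then EE(G) ≥ e^{α} + n - α - 1. -/
/-! The all-ones vector shows that α is an adjacency eigenvalue, and the eigenvalues sum to the
trace, which is 0. Bounding every other term by `e^λ ≥ 1 + λ` leaves `e^α + (n - 1) - α`. -/

open Finset

theorem SimpleGraph.IsRegularOfDegree.natCast_mem_spectrum_adjMatrix {V K : Type*} [Fintype V]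
    [DecidableEq V] [Nonempty V] [Field K] {G : SimpleGraph V} [DecidableRel G.Adj] {d : ℕ}
    (hd : G.IsRegularOfDegree d) : (d : K) ∈ spectrum K (G.adjMatrix K) := by
  rw [← Matrix.spectrum_toLin', ← Module.End.hasEigenvalue_iff_mem_spectrum]
  refine Module.End.hasEigenvalue_of_hasEigenvector (x := Function.const V 1) ?_
  refine Module.End.hasEigenvector_iff.mpr ⟨?_, Function.const_ne_zero.mpr one_ne_zero⟩
  rw [Module.End.mem_eigenspace_iff, Matrix.toLin'_apply]
  ext v
  simp [hd v]

theorem Real.exp_add_sum_sub_add_card_sub_one_le_sum_exp {ι : Type*} [Fintype ι] [DecidableEq ι]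
    (x : ι → ℝ) (i₀ : ι) :
    Real.exp (x i₀) + (∑ i, x i - x i₀) + (Fintype.card ι - 1) ≤ ∑ i, Real.exp (x i) := by
  rw [← add_sum_erase _ x (mem_univ i₀), ← add_sum_erase _ (fun i => Real.exp (x i)) (mem_univ i₀)]
  have hcard : ((univ.erase i₀).card : ℝ) = Fintype.card ι - 1 := by
    rw [card_erase_of_mem (mem_univ i₀), Nat.cast_sub (card_pos.mpr ⟨i₀, mem_univ _⟩)]
    simp
  have key : ∑ i ∈ univ.erase i₀, (x i + 1) ≤ ∑ i ∈ univ.erase i₀, Real.exp (x i) :=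
    sum_le_sum fun i _ => Real.add_one_le_exp (x i)
  rw [sum_add_distrib, sum_const, nsmul_one, hcard] at key
  linarith

theorem stmt_4 {n : ℕ} (G : SimpleGraph (Fin n)) [DecidableRel G.Adj]
    (α : ℕ) (hreg : G.IsRegularOfDegree α) (hconn : G.Connected)
    (hH : (G.adjMatrix ℝ).IsHermitian) :
    ∑ i, Real.exp (hH.eigenvalues i) ≥
      Real.exp (α : ℝ) + (n : ℝ) - (α : ℝ) - 1 := by
  have : Nonempty (Fin n) := hconn.nonempty
  obtain ⟨i₀, hi₀⟩ : (α : ℝ) ∈ Set.range hH.eigenvalues := by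
    rw [← hH.spectrum_real_eq_range_eigenvalues]
    exact hreg.natCast_mem_spectrum_adjMatrix
  have htrace : ∑ i, hH.eigenvalues i = 0 := by
    simpa using hH.trace_eq_sum_eigenvalues.symm
  have hbound := Real.exp_add_sum_sub_add_card_sub_one_le_sum_exp hH.eigenvalues i₀
  rw [hi₀, htrace, Fintype.card_fin] at hbound
  linarith
end

section
/- Let G be a graph with n vertices and m edges whose largest signless Laplacian eigenvalue q₁ satisfies q₁ ≥ 4m/n. Then Σᵢ e^{qᵢ} ≥ e^{4m/n} + (n - 1) + 2m - 4m/n. -/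
/-!
Every eigenvalue satisfies `e^q ≥ 1 + q`, so the total excess `∑ (e^{qᵢ} - qᵢ - 1)` is at least the
excess of `q₁` alone. Since `x ↦ e^x - x` is increasing on `[0, ∞)` and
`q₁ ≥ 4m/n ≥ 0`, that excess is at least `e^{4m/n} - 4m/n - 1`; adding back `∑ qᵢ = 2m` gives the bound.
-/

open Finset Real

theorem Real.monotoneOn_exp_sub_self : MonotoneOn (fun x => exp x - x) (Set.Ici 0) := by
  intro a ha b _ hab
  have hexp_split : exp b = exp a * exp (b - a) := by rw [← exp_add, add_sub_cancel]
  have h_one_add : b - a + 1 ≤ exp (b - a) := add_one_le_exp _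
  have h_one_le : 1 ≤ exp a := one_le_exp ha
  show exp a - a ≤ exp b - b
  nlinarith

theorem Real.exp_add_card_add_sum_sub_le_sum_exp {ι : Type*} [Fintype ι] (x : ι → ℝ) (i₀ : ι)
    {c : ℝ} (hc : 0 ≤ c) (hx : c ≤ x i₀) :
    exp c + ((Fintype.card ι : ℝ) - 1) + ∑ i, x i - c ≤ ∑ i, exp (x i) := by
  have h_excess : exp (x i₀) - x i₀ - 1 ≤ ∑ i, (exp (x i) - x i - 1) :=
    single_le_sum (f := fun i => exp (x i) - x i - 1)
      (fun i _ => by linarith [add_one_le_exp (x i)]) (mem_univ i₀)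
  have h_mono : exp c - c ≤ exp (x i₀) - x i₀ := monotoneOn_exp_sub_self hc (hc.trans hx) hx
  simp only [sum_sub_distrib, sum_const, card_univ, nsmul_eq_mul, mul_one] at h_excess
  linarith

theorem stmt_9_general {n : ℕ} (G : SimpleGraph (Fin n)) [DecidableRel G.Adj]
    (m : ℕ)
    (hH : (G.degMatrix ℝ + G.adjMatrix ℝ).IsHermitian)
    (hsum : ∑ i, hH.eigenvalues i = 2 * (m : ℝ))
    (i₀ : Fin n)
    (hq : hH.eigenvalues i₀ ≥ 4 * (m : ℝ) / n) :
    ∑ i, Real.exp (hH.eigenvalues i) ≥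
      Real.exp (4 * (m : ℝ) / n) + ((n : ℝ) - 1) + 2 * (m : ℝ) - 4 * (m : ℝ) / n := by
  have h := exp_add_card_add_sum_sub_le_sum_exp hH.eigenvalues i₀ (by positivity) hq
  rwa [Fintype.card_fin, hsum] at h

theorem stmt_9 {n : ℕ} (G : SimpleGraph (Fin n)) [DecidableRel G.Adj]
    (m : ℕ) (hm : m = G.edgeFinset.card)
    (hH : (G.degMatrix ℝ + G.adjMatrix ℝ).IsHermitian)
    (hnonneg : ∀ i, 0 ≤ hH.eigenvalues i)
    (hsum : ∑ i, hH.eigenvalues i = 2 * (m : ℝ))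
    (i₀ : Fin n) (hmax : ∀ i, hH.eigenvalues i ≤ hH.eigenvalues i₀)
    (hq : hH.eigenvalues i₀ ≥ 4 * (m : ℝ) / n) :
    ∑ i, Real.exp (hH.eigenvalues i) ≥
      Real.exp (4 * (m : ℝ) / n) + ((n : ℝ) - 1) + 2 * (m : ℝ) - 4 * (m : ℝ) / n :=
  stmt_9_general G m hH hsum i₀ hq
end

section
/- Let M be an n×n symmetric nonnegative real matrix with eigenvalues ρ₁, ..., ρₙ and r = min over i of the i-th row sum. Then Σᵢ e^{ρᵢ} ≥ e^{r} + Tr(M) + (n - 1) - r. -/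
/-!
Testing the quadratic form of `M` on the all-ones vector shows that the largest eigenvalue `ρ`
is at least the minimal row sum `r`, which is nonnegative. Then `e^ρ - ρ ≥ e^r - r` because
`x ↦ e^x - x` increases on `[0, ∞)`, the other eigenvalues satisfy `e^x ≥ x + 1`, and the
eigenvalues sum to the trace.
-/

open Matrix Finset

namespace Matrix.IsHermitian

variable {ι : Type*} [Fintype ι] [DecidableEq ι] {A : Matrix ι ι ℝ}

theorem dotProduct_mulVec_le_of_eigenvalues_le (hA : A.IsHermitian) (v : ι → ℝ) {c : ℝ}
    (hc : ∀ i, hA.eigenvalues i ≤ c) : v ⬝ᵥ A *ᵥ v ≤ c * (v ⬝ᵥ v) := by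
  set U : Matrix ι ι ℝ := (hA.eigenvectorUnitary : Matrix ι ι ℝ)
  set w := Uᵀ *ᵥ v
  have hUU : U * Uᵀ = 1 := by
    simpa [U, star_eq_conjTranspose] using Unitary.coe_mul_star_self hA.eigenvectorUnitary
  have hquad : v ⬝ᵥ A *ᵥ v = ∑ i, hA.eigenvalues i * w i ^ 2 := by
    conv_lhs => rw [hA.spectral_theorem, Unitary.conjStarAlgAut_apply]
    rw [← mulVec_mulVec, ← mulVec_mulVec, dotProduct_mulVec, star_eq_conjTranspose,
      conjTranspose_eq_transpose_of_trivial, ← mulVec_transpose]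
    simp [dotProduct, mulVec_diagonal, w, U, sq, mul_left_comm]
  have hnorm : v ⬝ᵥ v = ∑ i, w i ^ 2 := by
    simp only [w, sq, ← dotProduct.eq_1, dotProduct_mulVec, vecMul_transpose, mulVec_mulVec, hUU,
      one_mulVec]
  rw [hquad, hnorm, mul_sum]
  exact sum_le_sum fun i _ => mul_le_mul_of_nonneg_right (hc i) (sq_nonneg _)

theorem exists_le_eigenvalues_of_le_sum_row [Nonempty ι] (hA : A.IsHermitian) {r : ℝ}
    (hr : ∀ i, r ≤ ∑ j, A i j) : ∃ j, r ≤ hA.eigenvalues j := by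
  obtain ⟨j, hj⟩ := Finite.exists_max hA.eigenvalues
  refine ⟨j, ?_⟩
  have hquad := hA.dotProduct_mulVec_le_of_eigenvalues_le (fun _ => 1) hj
  simp only [dotProduct, mulVec, one_mul, mul_one, sum_const, card_univ, nsmul_eq_mul] at hquad
  have hsum : (Fintype.card ι : ℝ) * r ≤ ∑ i, ∑ j, A i j := by
    simpa using sum_le_sum fun i (_ : i ∈ univ) => hr i
  have hcard : (0 : ℝ) < Fintype.card ι := by exact_mod_cast Fintype.card_pos
  nlinarith

end Matrix.IsHermitian

namespace Real

theorem exp_sub_le_exp_sub {r x : ℝ} (hr : 0 ≤ r) (hrx : r ≤ x) : exp r - r ≤ exp x - x := by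
  have hexp : exp x = exp r * exp (x - r) := by rw [← exp_add, add_sub_cancel]
  nlinarith [add_one_le_exp (x - r), one_le_exp hr]

theorem exp_add_sum_add_card_sub_one_sub_le_sum_exp {ι : Type*} [Fintype ι] (x : ι → ℝ)
    {r : ℝ} {j : ι} (hr : 0 ≤ r) (hrj : r ≤ x j) :
    exp r + ∑ i, x i + ((Fintype.card ι : ℝ) - 1) - r ≤ ∑ i, exp (x i) := by
  have hj : exp (x j) - (x j + 1) ≤ ∑ i, (exp (x i) - (x i + 1)) :=
    single_le_sum (f := fun i => exp (x i) - (x i + 1))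
      (fun i _ => by linarith [add_one_le_exp (x i)]) (mem_univ j)
  simp only [sum_sub_distrib, sum_add_distrib, sum_const, card_univ, nsmul_one] at hj
  linarith [exp_sub_le_exp_sub hr hrj]

end Real

theorem stmt_12 {n : ℕ} (hn : 0 < n) (M : Matrix (Fin n) (Fin n) ℝ)
    (hH : M.IsHermitian) (hnonneg : ∀ i j, 0 ≤ M i j) :
    haveI : Nonempty (Fin n) := ⟨⟨0, hn⟩⟩
    ∑ i, Real.exp (hH.eigenvalues i) ≥
      Real.exp (Finset.univ.inf' Finset.univ_nonempty (fun i => ∑ j, M i j)) + M.trace +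
        ((n : ℝ) - 1) - Finset.univ.inf' Finset.univ_nonempty (fun i => ∑ j, M i j) := by
  have : Nonempty (Fin n) := ⟨⟨0, hn⟩⟩
  set r := univ.inf' univ_nonempty fun i => ∑ j, M i j
  have hr : 0 ≤ r := le_inf' _ _ fun i _ => sum_nonneg fun j _ => hnonneg i j
  obtain ⟨j, hj⟩ := hH.exists_le_eigenvalues_of_le_sum_row (r := r) fun i =>
    inf'_le (fun i => ∑ j, M i j) (mem_univ i)
  rw [hH.trace_eq_sum_eigenvalues]
  simpa only [Fintype.card_fin, RCLike.ofReal_real_eq_id, id] using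
    Real.exp_add_sum_add_card_sub_one_sub_le_sum_exp hH.eigenvalues hr hj
end

section
/- Let G have adjacency eigenvalues λ₁ ≥ ... ≥ λₙ with Σᵢ λᵢ = 0, exactly k of which are nonnegative. Then EE(G) ≥ E(G)/2 + e^{λ₁} + (k - 1) - λ₁, where E(G) = Σᵢ |λᵢ|. -/
/-!
Since the eigenvalues sum to zero, the energy is twice the sum of the nonnegative eigenvalues.
Keep the term `e^{λ₁}` of the Estrada index, bound each of the other `k - 1` terms with
`λᵢ ≥ 0` by `λᵢ + 1 ≤ e^{λᵢ}`, and drop the remaining (positive) terms.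
-/

open Finset Real

variable {ι : Type*} [Fintype ι]

lemma nonneg_of_sum_eq_zero_of_forall_le {f : ι → ℝ} (hsum : ∑ i, f i = 0) {i₀ : ι}
    (hmax : ∀ i, f i ≤ f i₀) : 0 ≤ f i₀ := by
  by_contra! hneg
  have : ∑ i, f i < 0 := sum_neg (fun i _ => (hmax i).trans_lt hneg) ⟨i₀, mem_univ i₀⟩
  linarith

lemma sum_abs_eq_two_mul_sum_filter_nonneg {f : ι → ℝ} (hsum : ∑ i, f i = 0) :
    ∑ i, |f i| = 2 * ∑ i with 0 ≤ f i, f i := by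
  have habs : ∀ i, |f i| = 2 * (if 0 ≤ f i then f i else 0) - f i := by
    intro i
    split_ifs with h
    · rw [abs_of_nonneg h]; ring
    · rw [abs_of_neg (not_le.mp h)]; ring
  calc ∑ i, |f i| = ∑ i, 2 * (if 0 ≤ f i then f i else 0) - ∑ i, f i := by
        rw [← sum_sub_distrib]; exact sum_congr rfl fun i _ => habs i
    _ = 2 * ∑ i with 0 ≤ f i, f i := by rw [hsum, sub_zero, ← mul_sum, sum_filter]

lemma exp_add_sum_sub_add_card_sub_one_le_sum_exp [DecidableEq ι] (f : ι → ℝ) {s : Finset ι}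
    {i₀ : ι} (hi₀ : i₀ ∈ s) :
    exp (f i₀) + (∑ i ∈ s, f i - f i₀) + ((#s : ℝ) - 1) ≤ ∑ i, exp (f i) := by
  have hlinear : ∑ i ∈ s.erase i₀, (f i + 1) = (∑ i ∈ s, f i - f i₀) + ((#s : ℝ) - 1) := by
    rw [sum_erase_eq_sub hi₀, sum_add_distrib, sum_const, nsmul_one]
    ring
  calc exp (f i₀) + (∑ i ∈ s, f i - f i₀) + ((#s : ℝ) - 1)
      = exp (f i₀) + ∑ i ∈ s.erase i₀, (f i + 1) := by rw [hlinear, add_assoc]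
    _ ≤ exp (f i₀) + ∑ i ∈ s.erase i₀, exp (f i) := by
        gcongr with i
        exact add_one_le_exp (f i)
    _ = ∑ i ∈ s, exp (f i) := add_sum_erase s (fun i => exp (f i)) hi₀
    _ ≤ ∑ i, exp (f i) :=
        sum_le_sum_of_subset_of_nonneg (subset_univ s) fun i _ _ => (exp_pos _).le

theorem stmt_15 {n : ℕ} (G : SimpleGraph (Fin n)) [DecidableRel G.Adj]
    (hH : (G.adjMatrix ℝ).IsHermitian)
    (hsum : ∑ i, hH.eigenvalues i = 0)
    (i₀ : Fin n) (hmax : ∀ i, hH.eigenvalues i ≤ hH.eigenvalues i₀)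
    (k : ℕ) (hk : k = (Finset.univ.filter (fun i => 0 ≤ hH.eigenvalues i)).card) :
    ∑ i, Real.exp (hH.eigenvalues i) ≥
      (∑ i, |hH.eigenvalues i|) / 2 + Real.exp (hH.eigenvalues i₀) + ((k : ℝ) - 1) -
        hH.eigenvalues i₀ := by
  have hi₀ : i₀ ∈ univ.filter (fun i => 0 ≤ hH.eigenvalues i) :=
    mem_filter.mpr ⟨mem_univ i₀, nonneg_of_sum_eq_zero_of_forall_le hsum hmax⟩
  have key := exp_add_sum_sub_add_card_sub_one_le_sum_exp hH.eigenvalues hi₀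
  rw [sum_abs_eq_two_mul_sum_filter_nonneg hsum, hk]
  linarith
end
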